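/- Let u : ℝ → ℂ be continuous, 2π-periodic and continuously differentiable, and define U(r e^{iθ}) = (1/2π) ∫_{-π}^{π} u(t) P_r(θ - t) dt. Then dU/dθ(r e^{iθ}) → u'(θ) uniformly in θ ∈ ℝ as r → 1⁻. -/

import Mathlib

open Complex Real MeasureTheory

noncomputable def poissonKernel' (r θ : ℝ) : ℝ :=
  (1 - r ^ 2) / (1 + r ^ 2 - 2 * r * Real.cos θ)

/-! The Poisson kernel is an approximate identity: it is nonnegative, its integral over a period
is `2π` (the Poisson formula for the constant harmonic function `1`), and on `δ ≤ |θ| ≤ π` it is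
at most `P_r(δ)`, which tends to `0` as `r → 1`. Hence the Poisson integral of a continuous
periodic function `f` differs from `f θ` by at most `ε + 2 ‖f‖∞ P_r(δ)` when `f` oscillates by
less than `ε` on intervals of length `δ`, uniformly in `θ`. The function `dU` of the theorem is
the Poisson integral of `u'`, which is continuous and `2π`-periodic. -/

open Filter Topology

lemma Function.Periodic.deriv {F : Type*} [NormedAddCommGroup F] [NormedSpace ℝ F]
    {f : ℝ → F} {c : ℝ} (h : Function.Periodic f c) : Function.Periodic (deriv f) c := by
  intro t
  rw [← deriv_comp_add_const, h.funext]

lemma Function.Periodic.uniformContinuous_of_continuous {E : Type*} [UniformSpace E]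
    {f : ℝ → E} {c : ℝ} (hc : 0 < c) (hp : Function.Periodic f c) (hf : Continuous f) :
    UniformContinuous f := by
  have : Fact (0 < c) := ⟨hc⟩
  have hlift : Continuous (hp.lift : AddCircle c → E) := continuous_quot_lift _ hf
  have hmk : UniformContinuous (QuotientAddGroup.mk : ℝ → AddCircle c) :=
    uniformContinuous_addMonoidHom_of_continuous (f := QuotientAddGroup.mk' _)
      (AddCircle.continuous_mk' c)
  exact (CompactSpace.uniformContinuous_of_continuous hlift).comp hmk

section PoissonKernel

variable {r : ℝ}

lemma poissonKernel'_denom_pos (hr0 : 0 ≤ r) (hr1 : r < 1) (θ : ℝ) :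
    0 < 1 + r ^ 2 - 2 * r * Real.cos θ := by
  nlinarith [Real.cos_le_one θ, Real.neg_one_le_cos θ]

lemma poissonKernel'_nonneg (hr0 : 0 ≤ r) (hr1 : r < 1) (θ : ℝ) : 0 ≤ poissonKernel' r θ :=
  div_nonneg (by nlinarith) (poissonKernel'_denom_pos hr0 hr1 θ).le

lemma continuous_poissonKernel' (hr0 : 0 ≤ r) (hr1 : r < 1) : Continuous (poissonKernel' r) :=
  continuous_const.div (by fun_prop) fun θ => (poissonKernel'_denom_pos hr0 hr1 θ).ne'

lemma poissonKernel'_periodic (r : ℝ) : Function.Periodic (poissonKernel' r) (2 * π) := by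
  intro θ
  simp [poissonKernel']

lemma poissonKernel'_le_of_le_abs (hr0 : 0 ≤ r) (hr1 : r < 1) {δ θ : ℝ} (hδ : 0 ≤ δ)
    (hδθ : δ ≤ |θ|) (hθ : |θ| ≤ π) : poissonKernel' r θ ≤ poissonKernel' r δ := by
  have hcos : Real.cos θ ≤ Real.cos δ := by
    rw [← Real.cos_abs θ]
    exact Real.cos_le_cos_of_nonneg_of_le_pi hδ hθ hδθ
  exact div_le_div_of_nonneg_left (by nlinarith) (poissonKernel'_denom_pos hr0 hr1 δ)
    (by nlinarith)

lemma tendsto_poissonKernel'_one {θ : ℝ} (hθ : Real.cos θ ≠ 1) :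
    Tendsto (fun r => poissonKernel' r θ) (𝓝 1) (𝓝 0) := by
  have hcont : ContinuousAt (fun r => poissonKernel' r θ) 1 :=
    ContinuousAt.div (by fun_prop) (by fun_prop) (by contrapose! hθ; linarith)
  simpa [poissonKernel'] using hcont.tendsto

lemma poissonKernel'_eq_poissonKernel (r θ : ℝ) :
    poissonKernel' r θ = poissonKernel 0 r (circleMap 0 1 θ) := by
  have hnorm : ‖circleMap 0 1 θ - r‖ ^ 2 = 1 + r ^ 2 - 2 * r * Real.cos θ := by
    rw [← Complex.normSq_eq_norm_sq, Complex.normSq_apply]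
    simp [circleMap, Complex.exp_ofReal_mul_I_re, Complex.exp_ofReal_mul_I_im]
    nlinarith [Real.sin_sq_add_cos_sq θ]
  simp [poissonKernel', poissonKernel_def, hnorm]

lemma integral_poissonKernel' (hr0 : 0 ≤ r) (hr1 : r < 1) :
    ∫ θ in (-π)..π, poissonKernel' r θ = 2 * π := by
  have hw : (r : ℂ) ∈ Metric.ball (0 : ℂ) 1 := by simp [abs_of_nonneg hr0, hr1]
  have h := (InnerProductSpace.harmonicOnNhd_const (1 : ℝ)).circleAverage_poissonKernel_smul hw
  rw [Real.circleAverage_eq_integral_add (-π)] at h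
  simp only [Pi.smul_apply', smul_eq_mul, mul_one] at h
  simp_rw [← poissonKernel'_eq_poissonKernel] at h
  rw [intervalIntegral.integral_comp_add_right (poissonKernel' r), zero_add,
    show 2 * π + -π = π by ring] at h
  field_simp at h
  exact h

end PoissonKernel

noncomputable def poissonIntegral (f : ℝ → ℂ) (r θ : ℝ) : ℂ :=
  (1 / (2 * π)) * ∫ t in (-π)..π, f t * (poissonKernel' r (θ - t) : ℂ)

section PoissonIntegral

variable {f : ℝ → ℂ} {r : ℝ}

lemma poissonIntegral_sub_eq (hf : Continuous f) (hp : Function.Periodic f (2 * π))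
    (hr0 : 0 ≤ r) (hr1 : r < 1) (θ : ℝ) :
    poissonIntegral f r θ - f θ =
      (1 / (2 * π)) * ∫ s in (-π)..π, (f (θ - s) - f θ) * (poissonKernel' r s : ℂ) := by
  set g : ℝ → ℂ := fun s => f (θ - s) * (poissonKernel' r s : ℂ) with hg
  have hPc : Continuous fun s => (poissonKernel' r s : ℂ) :=
    continuous_ofReal.comp (continuous_poissonKernel' hr0 hr1)
  have hgc : Continuous g := (hf.comp (continuous_sub_left θ)).mul hPc
  have hgp : Function.Periodic g (2 * π) := fun s => by
    simp only [hg, sub_add_eq_sub_sub, hp.sub_eq, poissonKernel'_periodic r s]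
  have hconv : ∫ t in (-π)..π, f t * (poissonKernel' r (θ - t) : ℂ) = ∫ s in (-π)..π, g s := by
    have hgθ : ∀ t, f t * (poissonKernel' r (θ - t) : ℂ) = g (θ - t) := by simp [hg]
    simp_rw [hgθ, intervalIntegral.integral_comp_sub_left g θ]
    have := hgp.intervalIntegral_add_eq (θ - π) (-π)
    rwa [show θ - π + 2 * π = θ - -π by ring, show -π + 2 * π = π by ring] at this
  have hconst : (1 / (2 * π)) * ∫ s in (-π)..π, f θ * (poissonKernel' r s : ℂ) = f θ := by
    rw [intervalIntegral.integral_const_mul, intervalIntegral.integral_ofReal,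
      integral_poissonKernel' hr0 hr1]
    push_cast
    field_simp
  calc poissonIntegral f r θ - f θ
      = (1 / (2 * π)) * (∫ s in (-π)..π, g s) -
          (1 / (2 * π)) * ∫ s in (-π)..π, f θ * (poissonKernel' r s : ℂ) := by
        rw [poissonIntegral, hconv, hconst]
    _ = _ := by
        rw [← mul_sub, ← intervalIntegral.integral_sub (hgc.intervalIntegrable _ _)
          ((hPc.intervalIntegrable _ _).const_mul (f θ))]
        simp_rw [hg, sub_mul]

lemma norm_poissonIntegral_sub_le (hf : Continuous f) (hp : Function.Periodic f (2 * π))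
    (hr0 : 0 ≤ r) (hr1 : r < 1) {δ ε M : ℝ} (hδ : 0 < δ) (hM : ∀ x, ‖f x‖ ≤ M)
    (hmod : ∀ x y, dist x y < δ → dist (f x) (f y) < ε) (θ : ℝ) :
    ‖poissonIntegral f r θ - f θ‖ ≤ ε + 2 * M * poissonKernel' r δ := by
  have hε : 0 ≤ ε := (dist_nonneg.trans_lt (hmod θ θ (by simpa using hδ))).le
  have hM0 : 0 ≤ M := (norm_nonneg _).trans (hM 0)
  have hP := poissonKernel'_nonneg hr0 hr1
  have hpointwise : ∀ s ∈ Set.Icc (-π) π, ‖(f (θ - s) - f θ) * (poissonKernel' r s : ℂ)‖ ≤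
      ε * poissonKernel' r s + 2 * M * poissonKernel' r δ := by
    intro s hs
    rw [norm_mul, norm_real, Real.norm_of_nonneg (hP s)]
    by_cases hsδ : |s| < δ
    · have hclose : ‖f (θ - s) - f θ‖ ≤ ε := by
        rw [← dist_eq_norm]
        exact (hmod _ _ (by simpa [Real.dist_eq] using hsδ)).le
      linarith [mul_le_mul_of_nonneg_right hclose (hP s), mul_nonneg hM0 (hP δ)]
    · have hfar : poissonKernel' r s ≤ poissonKernel' r δ :=
        poissonKernel'_le_of_le_abs hr0 hr1 hδ.le (not_lt.mp hsδ) (abs_le.mpr hs)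
      have hbound : ‖f (θ - s) - f θ‖ ≤ 2 * M := by
        linarith [norm_sub_le (f (θ - s)) (f θ), hM (θ - s), hM θ]
      linarith [mul_le_mul hbound hfar (hP s) (by linarith), mul_nonneg hε (hP s)]
  have hintegral : ‖∫ s in (-π)..π, (f (θ - s) - f θ) * (poissonKernel' r s : ℂ)‖ ≤
      ε * (2 * π) + 2 * M * poissonKernel' r δ * (2 * π) := by
    refine (intervalIntegral.norm_integral_le_of_norm_le (by linarith [pi_pos])
      (ae_of_all _ fun s hs => hpointwise s (Set.Ioc_subset_Icc_self hs))
      (((continuous_poissonKernel' hr0 hr1).intervalIntegrable _ _).const_mul ε |>.add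
        intervalIntegrable_const)).trans_eq ?_
    rw [intervalIntegral.integral_add (((continuous_poissonKernel' hr0 hr1).intervalIntegrable
      _ _).const_mul ε) intervalIntegrable_const, intervalIntegral.integral_const_mul,
      integral_poissonKernel' hr0 hr1, intervalIntegral.integral_const, smul_eq_mul]
    ring
  have hnorm : ‖(1 / (2 * π) : ℂ)‖ = 1 / (2 * π) := by simp [abs_of_pos pi_pos]
  rw [poissonIntegral_sub_eq hf hp hr0 hr1, norm_mul, hnorm]
  calc 1 / (2 * π) * ‖∫ s in (-π)..π, (f (θ - s) - f θ) * (poissonKernel' r s : ℂ)‖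
      ≤ 1 / (2 * π) * (ε * (2 * π) + 2 * M * poissonKernel' r δ * (2 * π)) := by gcongr
    _ = ε + 2 * M * poissonKernel' r δ := by field_simp

theorem tendstoUniformly_poissonIntegral (hf : Continuous f)
    (hp : Function.Periodic f (2 * π)) :
    TendstoUniformly (poissonIntegral f) f (𝓝[<] 1) := by
  rw [Metric.tendstoUniformly_iff]
  intro ε hε
  obtain ⟨M, hM⟩ := isBounded_iff_forall_norm_le.mp (hp.isBounded_of_continuous two_pi_pos.ne' hf)
  obtain ⟨δ₀, hδ₀, hmod⟩ := Metric.uniformContinuous_iff.mp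
    (hp.uniformContinuous_of_continuous two_pi_pos hf) (ε / 2) (half_pos hε)
  set δ := min δ₀ π
  have hδ : 0 < δ := lt_min hδ₀ pi_pos
  have hcos : Real.cos δ ≠ 1 := fun h => hδ.ne'
    ((cos_eq_one_iff_of_lt_of_lt (by linarith [pi_pos]) (by linarith [min_le_right δ₀ π])).mp h)
  have htail : ∀ᶠ r in 𝓝[<] 1, 2 * M * poissonKernel' r δ < ε / 2 := by
    refine (((tendsto_poissonKernel'_one hcos).const_mul (2 * M)).mono_left
      nhdsWithin_le_nhds).eventually_lt_const ?_
    simpa using half_pos hε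
  filter_upwards [htail, nhdsWithin_le_nhds (eventually_gt_nhds one_pos), self_mem_nhdsWithin]
    with r htail hr0 hr1 θ
  rw [dist_comm, dist_eq_norm]
  calc ‖poissonIntegral f r θ - f θ‖ ≤ ε / 2 + 2 * M * poissonKernel' r δ :=
        norm_poissonIntegral_sub_le hf hp hr0.le hr1 hδ (fun x => hM _ (Set.mem_range_self x))
          (fun x y hxy => hmod (hxy.trans_le (min_le_left _ _))) θ
    _ < ε := by linarith

end PoissonIntegral

theorem stmt1_general (u : ℝ → ℂ)
    (hper : ∀ t, u (t + 2 * π) = u t) (hu1 : ContDiff ℝ 1 u)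
    (dU : ℝ → ℝ → ℂ)
    (hdU : ∀ r θ, dU r θ =
      (1 / (2 * π)) * ∫ t in (-π)..π, deriv u t * (poissonKernel' r (θ - t) : ℂ)) :
    TendstoUniformly dU (deriv u) (nhdsWithin 1 (Set.Iio 1)) := by
  obtain rfl : dU = poissonIntegral (deriv u) := funext₂ hdU
  exact tendstoUniformly_poissonIntegral (hu1.continuous_deriv le_rfl)
    (Function.Periodic.deriv hper)

theorem stmt1 (u : ℝ → ℂ) (hu : Continuous u)
    (hper : ∀ t, u (t + 2 * π) = u t) (hu1 : ContDiff ℝ 1 u)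
    (dU : ℝ → ℝ → ℂ)
    (hdU : ∀ r θ, dU r θ =
      (1 / (2 * π)) * ∫ t in (-π)..π, deriv u t * (poissonKernel' r (θ - t) : ℂ)) :
    TendstoUniformly dU (deriv u) (nhdsWithin 1 (Set.Iio 1)) :=
  stmt1_general u hper hu1 dU hdU
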